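/- arXiv:1508.03921 — 2 statements merged into one kernel-verified Lean document; each statement's English description precedes it below -/
import Mathlib

section
/- In the zero-sum case U¹ = −U² = U, for every ε > 0, let (ρ₀^ε, τ₀^ε) be an ε-saddle point for the Dynkin game with payoff V(ρ₀,τ₀) := E[X_{ρ₀}1_{ρ₀<τ₀} + Y_{τ₀}1_{ρ₀>τ₀} + Z_{ρ₀}1_{ρ₀=τ₀}], and let h > 0 be small enough that X_{ρ₀} > E[U(ρ₀,τ_h(ρ₀))|𝓕_{ρ₀}] − 2ε and Y_{τ₀} < E[U(ρ_h(τ₀),τ₀)|𝓕_{τ₀}] + 2ε for all ρ₀,τ₀ ∈ 𝒯. Then (ρ^ε, τ^ε) := ((ρ₀^ε, ρ_h), (τ₀^ε, τ_h)) is a 5ε-Nash equilibrium for the game u¹(ρ,τ) = E[U(ρ[τ],τ[ρ])] = −u²(ρ,τ): for all ρ,τ ∈ 𝔗, u¹(ρ, τ^ε) ≤ u¹(ρ^ε, τ^ε) + 5ε and u²(ρ^ε, τ) ≤ u²(ρ^ε, τ^ε) + 5ε. -/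
/-!
Common setup for "On the non-zero-sum stopping game ending at the maximum of the stopping
strategies".  Time is indexed by `[0,∞] = ℝ≥0∞`.  Since `Ω` is at most countable and `ℙ`
charges every point, essential suprema/infima over families of stopping times coincide with
the pointwise ones, which is how they are formalized below.
-/

open MeasureTheory Filter Set
open scoped ENNReal Topology

noncomputable section

namespace StoppingGames

variable {Ω : Type*} [mΩ : MeasurableSpace Ω]

/-- `|a - b|` on `[0,∞]`, via truncated subtraction. -/
def dd (a b : ℝ≥0∞) : ℝ≥0∞ := (a - b) + (b - a)

/-- `𝒯`, the set of stopping times with values in `[0,∞]`. -/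
def ST (𝓕 : Filtration ℝ≥0∞ mΩ) : Set (Ω → ℝ≥0∞) := {τ | IsStoppingTime 𝓕 (fun ω => (τ ω : WithTop ℝ≥0∞))}

/-- `𝒯_σ`, the stopping times no less than `σ`. -/
def STge (𝓕 : Filtration ℝ≥0∞ mΩ) (σ : Ω → ℝ≥0∞) : Set (Ω → ℝ≥0∞) :=
  {τ | IsStoppingTime 𝓕 (fun ω => (τ ω : WithTop ℝ≥0∞)) ∧ ∀ ω, σ ω ≤ τ ω}

/-- `𝒯_{t+}`, the stopping times strictly greater than `t`. -/
def STgt (𝓕 : Filtration ℝ≥0∞ mΩ) (t : ℝ≥0∞) : Set (Ω → ℝ≥0∞) :=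
  {τ | IsStoppingTime 𝓕 (fun ω => (τ ω : WithTop ℝ≥0∞)) ∧ ∀ ω, t < τ ω}

/-- The class `𝕋` of jointly measurable maps `φ : [0,∞] × Ω → [0,∞]` with
`φ(t,·) ∈ 𝒯_{t+}` for every finite `t`. -/
def IsTT (𝓕 : Filtration ℝ≥0∞ mΩ) (φ : ℝ≥0∞ → Ω → ℝ≥0∞) : Prop :=
  Measurable (Function.uncurry φ) ∧ ∀ t : ℝ≥0∞, t ≠ ∞ → φ t ∈ STgt 𝓕 t

/-- A stopping strategy `ρ = (ρ₀, ρ₁) ∈ 𝔗`. -/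
def IsStrategy (𝓕 : Filtration ℝ≥0∞ mΩ) (ρ : (Ω → ℝ≥0∞) × (ℝ≥0∞ → Ω → ℝ≥0∞)) : Prop :=
  IsStoppingTime 𝓕 (fun ω => (ρ.1 ω : WithTop ℝ≥0∞)) ∧ IsTT 𝓕 ρ.2

/-- `𝔗_σ`, the stopping strategies whose first component is `≥ σ`. -/
def IsStrategyGe (𝓕 : Filtration ℝ≥0∞ mΩ) (σ : Ω → ℝ≥0∞)
    (ρ : (Ω → ℝ≥0∞) × (ℝ≥0∞ → Ω → ℝ≥0∞)) : Prop :=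
  IsStrategy 𝓕 ρ ∧ ∀ ω, σ ω ≤ ρ.1 ω

/-- `ρ[τ] = ρ₀ 1_{ρ₀ ≤ τ₀} + ρ₁(τ₀) 1_{ρ₀ > τ₀}`. -/
def play (ρ τ : (Ω → ℝ≥0∞) × (ℝ≥0∞ → Ω → ℝ≥0∞)) : Ω → ℝ≥0∞ := fun ω =>
  if ρ.1 ω ≤ τ.1 ω then ρ.1 ω else ρ.2 (τ.1 ω) ω

/-- `u(ρ,τ) = E[U(ρ[τ], τ[ρ])]`. -/
def payoff (μ : Measure Ω) (U : ℝ≥0∞ → ℝ≥0∞ → Ω → ℝ)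
    (ρ τ : (Ω → ℝ≥0∞) × (ℝ≥0∞ → Ω → ℝ≥0∞)) : ℝ :=
  ∫ ω, U (play ρ τ ω) (play τ ρ ω) ω ∂μ

/-- `u_σ(ρ,τ) = E[U(ρ[τ], τ[ρ]) | m]`. -/
def condPayoff (μ : Measure Ω) (m : MeasurableSpace Ω) (U : ℝ≥0∞ → ℝ≥0∞ → Ω → ℝ)
    (ρ τ : (Ω → ℝ≥0∞) × (ℝ≥0∞ → Ω → ℝ≥0∞)) : Ω → ℝ :=
  μ[fun ω => U (play ρ τ ω) (play τ ρ ω) ω | m]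

/-- The grid point `n·h ∈ [0,∞]`. -/
def grid (h : ℝ) (n : ℕ) : ℝ≥0∞ := ENNReal.ofReal (n * h)

/-- `⌊t/h⌋ + 1`. -/
def gridIdx (h : ℝ) (t : ℝ≥0∞) : ℕ := ⌊t.toReal / h⌋₊ + 1

/-- `ρ_h(t) := ρ̄((⌊t/h⌋+1)h)` for finite `t`, and `ρ_h(∞) := ∞`. -/
def gridStrat (h : ℝ) (bar : ℕ → Ω → ℝ≥0∞) : ℝ≥0∞ → Ω → ℝ≥0∞ := fun t ω =>
  if t = ∞ then ∞ else bar (gridIdx h t) ω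

/-- Evaluation `φ(σ) : ω ↦ φ(σ(ω), ω)` of a time-indexed family along a random time. -/
def evalAt (φ : ℝ≥0∞ → Ω → ℝ≥0∞) (σ : Ω → ℝ≥0∞) : Ω → ℝ≥0∞ := fun ω => φ (σ ω) ω

/-- `X_t = ess inf_{σ ∈ 𝒯_t} E[U(t,σ) | 𝓕_t]` (pointwise infimum, which coincides with the
essential one since `Ω` is countable and every point is charged). -/
def X1v (μ : Measure Ω) (𝓕 : Filtration ℝ≥0∞ mΩ) (U : ℝ≥0∞ → ℝ≥0∞ → Ω → ℝ)
    (t : ℝ≥0∞) (ω : Ω) : ℝ :=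
  ⨅ σ : STge 𝓕 (fun _ => t), (μ[fun ω' => U t (σ.1 ω') ω' | 𝓕 t]) ω

/-- `Y_t = ess sup_{σ ∈ 𝒯_t} E[U(σ,t) | 𝓕_t]`. -/
def Y1v (μ : Measure Ω) (𝓕 : Filtration ℝ≥0∞ mΩ) (U : ℝ≥0∞ → ℝ≥0∞ → Ω → ℝ)
    (t : ℝ≥0∞) (ω : Ω) : ℝ :=
  ⨆ σ : STge 𝓕 (fun _ => t), (μ[fun ω' => U (σ.1 ω') t ω' | 𝓕 t]) ω

/-- Player 2: `X²_t = ess sup_{σ ∈ 𝒯_t} E[U²(t,σ) | 𝓕_t]`. -/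
def X2v (μ : Measure Ω) (𝓕 : Filtration ℝ≥0∞ mΩ) (U : ℝ≥0∞ → ℝ≥0∞ → Ω → ℝ)
    (t : ℝ≥0∞) (ω : Ω) : ℝ :=
  ⨆ σ : STge 𝓕 (fun _ => t), (μ[fun ω' => U t (σ.1 ω') ω' | 𝓕 t]) ω

/-- Player 2: `Y²_t = ess inf_{σ ∈ 𝒯_t} E[U²(σ,t) | 𝓕_t]`. -/
def Y2v (μ : Measure Ω) (𝓕 : Filtration ℝ≥0∞ mΩ) (U : ℝ≥0∞ → ℝ≥0∞ → Ω → ℝ)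
    (t : ℝ≥0∞) (ω : Ω) : ℝ :=
  ⨅ σ : STge 𝓕 (fun _ => t), (μ[fun ω' => U (σ.1 ω') t ω' | 𝓕 t]) ω

/-- `Z_t = U(t,t)`. -/
def Zv (U : ℝ≥0∞ → ℝ≥0∞ → Ω → ℝ) : ℝ≥0∞ → Ω → ℝ := fun t ω => U t t ω

/-- `X_{ρ₀} 1_{ρ₀ < τ₀} + Y_{τ₀} 1_{ρ₀ > τ₀} + Z_{ρ₀} 1_{ρ₀ = τ₀}`. -/
def dynkinKernel (X Y Z : ℝ≥0∞ → Ω → ℝ) (ρ₀ τ₀ : Ω → ℝ≥0∞) (ω : Ω) : ℝ :=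
  if ρ₀ ω < τ₀ ω then X (ρ₀ ω) ω else if τ₀ ω < ρ₀ ω then Y (τ₀ ω) ω else Z (ρ₀ ω) ω

/-- The Dynkin-game payoff `V(ρ₀,τ₀)`. -/
def dynkinV (μ : Measure Ω) (X Y Z : ℝ≥0∞ → Ω → ℝ) (ρ₀ τ₀ : Ω → ℝ≥0∞) : ℝ :=
  ∫ ω, dynkinKernel X Y Z ρ₀ τ₀ ω ∂μ

/-- The conditional Dynkin-game payoff. -/
def condDynkin (μ : Measure Ω) (m : MeasurableSpace Ω) (X Y Z : ℝ≥0∞ → Ω → ℝ)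
    (ρ₀ τ₀ : Ω → ℝ≥0∞) : Ω → ℝ :=
  μ[fun ω => dynkinKernel X Y Z ρ₀ τ₀ ω | m]

/-- `v_t¹`, the (sup-inf) value of the conditional Dynkin game `G_t¹` with payoffs
`(X¹, Y¹, Z¹)` built from `U¹`. -/
def v1v (μ : Measure Ω) (𝓕 : Filtration ℝ≥0∞ mΩ) (U : ℝ≥0∞ → ℝ≥0∞ → Ω → ℝ)
    (t : ℝ≥0∞) (ω : Ω) : ℝ :=
  ⨆ ρ₀ : STge 𝓕 (fun _ => t), ⨅ τ₀ : STge 𝓕 (fun _ => t),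
    condDynkin μ (𝓕 t) (X1v μ 𝓕 U) (Y1v μ 𝓕 U) (Zv U) ρ₀.1 τ₀.1 ω

/-- `v_t²`, the (inf-sup) value of the conditional Dynkin game `G_t²` with payoffs
`(X², Y², Z²)` built from `U²`. -/
def v2v (μ : Measure Ω) (𝓕 : Filtration ℝ≥0∞ mΩ) (U : ℝ≥0∞ → ℝ≥0∞ → Ω → ℝ)
    (t : ℝ≥0∞) (ω : Ω) : ℝ :=
  ⨅ ρ₀ : STge 𝓕 (fun _ => t), ⨆ τ₀ : STge 𝓕 (fun _ => t),
    condDynkin μ (𝓕 t) (X2v μ 𝓕 U) (Y2v μ 𝓕 U) (Zv U) ρ₀.1 τ₀.1 ω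

/-- `W_t¹ = E[U¹(t, τ_h²(t)) | 𝓕_t]`. -/
def W1v (μ : Measure Ω) (𝓕 : Filtration ℝ≥0∞ mΩ) (U : ℝ≥0∞ → ℝ≥0∞ → Ω → ℝ)
    (h : ℝ) (bar : ℕ → Ω → ℝ≥0∞) (t : ℝ≥0∞) (ω : Ω) : ℝ :=
  (μ[fun ω' => U t (gridStrat h bar t ω') ω' | 𝓕 t]) ω

/-- `W_t² = E[U²(ρ_h¹(t), t) | 𝓕_t]`. -/
def W2v (μ : Measure Ω) (𝓕 : Filtration ℝ≥0∞ mΩ) (U : ℝ≥0∞ → ℝ≥0∞ → Ω → ℝ)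
    (h : ℝ) (bar : ℕ → Ω → ℝ≥0∞) (t : ℝ≥0∞) (ω : Ω) : ℝ :=
  (μ[fun ω' => U (gridStrat h bar t ω') t ω' | 𝓕 t]) ω

/-- `μ₁ = inf {t ≥ 0 : v_t¹ ≤ W_t¹ + ε}`. -/
def mu1T (μ : Measure Ω) (𝓕 : Filtration ℝ≥0∞ mΩ) (U : ℝ≥0∞ → ℝ≥0∞ → Ω → ℝ)
    (h ε : ℝ) (bar : ℕ → Ω → ℝ≥0∞) : Ω → ℝ≥0∞ := fun ω =>
  sInf {t | v1v μ 𝓕 U t ω ≤ W1v μ 𝓕 U h bar t ω + ε}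

/-- `μ₂ = inf {t ≥ 0 : v_t² ≤ W_t² + ε}`. -/
def mu2T (μ : Measure Ω) (𝓕 : Filtration ℝ≥0∞ mΩ) (U : ℝ≥0∞ → ℝ≥0∞ → Ω → ℝ)
    (h ε : ℝ) (bar : ℕ → Ω → ℝ≥0∞) : Ω → ℝ≥0∞ := fun ω =>
  sInf {t | v2v μ 𝓕 U t ω ≤ W2v μ 𝓕 U h bar t ω + ε}

/-- `ρ̄(nh)` is a family of `ε`-optimizers for `Y¹_{nh}`:
`E[U(ρ̄(nh), nh) | 𝓕_{nh}] ≥ Y_{nh} − ε`. -/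
def IsOptRho1 (μ : Measure Ω) (𝓕 : Filtration ℝ≥0∞ mΩ) (U : ℝ≥0∞ → ℝ≥0∞ → Ω → ℝ)
    (ε h : ℝ) (bar : ℕ → Ω → ℝ≥0∞) : Prop :=
  ∀ n : ℕ, bar n ∈ STge 𝓕 (fun _ => grid h n) ∧
    ∀ᵐ ω ∂μ, Y1v μ 𝓕 U (grid h n) ω - ε ≤
      (μ[fun ω' => U (bar n ω') (grid h n) ω' | 𝓕 (grid h n)]) ω

/-- `τ̄(nh)` is a family of `ε`-optimizers for `X¹_{nh}`:
`E[U(nh, τ̄(nh)) | 𝓕_{nh}] ≤ X_{nh} + ε`. -/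
def IsOptTau1 (μ : Measure Ω) (𝓕 : Filtration ℝ≥0∞ mΩ) (U : ℝ≥0∞ → ℝ≥0∞ → Ω → ℝ)
    (ε h : ℝ) (bar : ℕ → Ω → ℝ≥0∞) : Prop :=
  ∀ n : ℕ, bar n ∈ STge 𝓕 (fun _ => grid h n) ∧
    ∀ᵐ ω ∂μ, (μ[fun ω' => U (grid h n) (bar n ω') ω' | 𝓕 (grid h n)]) ω ≤
      X1v μ 𝓕 U (grid h n) ω + ε

/-- `ρ̄²(nh)` is a family of `ε`-optimizers for `Y²_{nh}` (an essential infimum). -/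
def IsOptRho2 (μ : Measure Ω) (𝓕 : Filtration ℝ≥0∞ mΩ) (U : ℝ≥0∞ → ℝ≥0∞ → Ω → ℝ)
    (ε h : ℝ) (bar : ℕ → Ω → ℝ≥0∞) : Prop :=
  ∀ n : ℕ, bar n ∈ STge 𝓕 (fun _ => grid h n) ∧
    ∀ᵐ ω ∂μ, (μ[fun ω' => U (bar n ω') (grid h n) ω' | 𝓕 (grid h n)]) ω ≤
      Y2v μ 𝓕 U (grid h n) ω + ε

/-- `τ̄²(nh)` is a family of `ε`-optimizers for `X²_{nh}` (an essential supremum). -/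
def IsOptTau2 (μ : Measure Ω) (𝓕 : Filtration ℝ≥0∞ mΩ) (U : ℝ≥0∞ → ℝ≥0∞ → Ω → ℝ)
    (ε h : ℝ) (bar : ℕ → Ω → ℝ≥0∞) : Prop :=
  ∀ n : ℕ, bar n ∈ STge 𝓕 (fun _ => grid h n) ∧
    ∀ᵐ ω ∂μ, X2v μ 𝓕 U (grid h n) ω - ε ≤
      (μ[fun ω' => U (grid h n) (bar n ω') ω' | 𝓕 (grid h n)]) ω

/-- The standing assumptions on the filtered probability space: `ℙ` charges every point of the
(countable) `Ω`, the filtration is right continuous (usual conditions; completeness is automatic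
since null sets are empty), and `𝓕 = 𝓕_∞ = ⋃_{t<∞} 𝓕_t`. -/
def UsualSetup (μ : Measure Ω) (𝓕 : Filtration ℝ≥0∞ mΩ) : Prop :=
  (∀ ω : Ω, μ {ω} ≠ 0) ∧
  (∀ t : ℝ≥0∞, (𝓕 t : MeasurableSpace Ω) = ⨅ s ∈ Ioi t, (𝓕 s : MeasurableSpace Ω)) ∧
  ((𝓕 ∞ : MeasurableSpace Ω) = mΩ) ∧
  ((⨆ t ∈ Iio (∞ : ℝ≥0∞), (𝓕 t : MeasurableSpace Ω)) = mΩ)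

/-- The standing assumptions on a payoff `U`: boundedness, `𝓕_{s∨t}`-measurability of `U(s,t)`,
and the uniform-continuity modulus `r` (bounded, nondecreasing, `r(0+) = r(0) = 0`).  Note that
the modulus condition, being imposed on all of `[0,∞]`, encodes that the values at `∞` are the
corresponding limits. -/
def PayoffAssumption (𝓕 : Filtration ℝ≥0∞ mΩ) (U : ℝ≥0∞ → ℝ≥0∞ → Ω → ℝ)
    (r : ℝ≥0∞ → ℝ) : Prop :=
  (∃ M : ℝ, ∀ s t ω, |U s t ω| ≤ M) ∧
  (∀ s t : ℝ≥0∞, Measurable[𝓕 (s ⊔ t)] (U s t)) ∧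
  Monotone r ∧ (∀ x, 0 ≤ r x) ∧ (∃ C : ℝ, ∀ x, r x ≤ C) ∧ r 0 = 0 ∧
  Tendsto r (𝓝[>] (0 : ℝ≥0∞)) (𝓝 (0 : ℝ)) ∧
  (∀ s t s' t' : ℝ≥0∞, ∀ ω, |U s t ω - U s' t' ω| ≤ r (dd s s' + dd t t'))

/-- The values of `U` at `∞` are the limits of the values at finite times. -/
def LimitsAtInfty (U : ℝ≥0∞ → ℝ≥0∞ → Ω → ℝ) : Prop :=
  (∀ s ω, Tendsto (fun b => U s b ω) (𝓝[<] (∞ : ℝ≥0∞)) (𝓝 (U s ∞ ω))) ∧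
  (∀ t ω, Tendsto (fun a => U a t ω) (𝓝[<] (∞ : ℝ≥0∞)) (𝓝 (U ∞ t ω))) ∧
  (∀ ω, Tendsto (fun p : ℝ≥0∞ × ℝ≥0∞ => U p.1 p.2 ω)
    ((𝓝[<] (∞ : ℝ≥0∞)) ×ˢ (𝓝[<] (∞ : ℝ≥0∞))) (𝓝 (U ∞ ∞ ω)))

/-- `ess inf_{σ ∈ 𝒯_v} E[U(s,σ) | 𝓕_v]` for a stopping time `v`. -/
def XatST (μ : Measure Ω) (𝓕 : Filtration ℝ≥0∞ mΩ) (U : ℝ≥0∞ → ℝ≥0∞ → Ω → ℝ)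
    {v : Ω → ℝ≥0∞} (hv : IsStoppingTime 𝓕 (fun ω => (v ω : WithTop ℝ≥0∞))) (s : ℝ≥0∞) (ω : Ω) : ℝ :=
  ⨅ σ : STge 𝓕 v, (μ[fun ω' => U s (σ.1 ω') ω' | hv.measurableSpace]) ω

/-- `X̃_v(s) = ess inf_{σ ∈ 𝒯_v} E[U(s,σ) | 𝓕_v]` for a deterministic time `v`. -/
def Xat (μ : Measure Ω) (𝓕 : Filtration ℝ≥0∞ mΩ) (U : ℝ≥0∞ → ℝ≥0∞ → Ω → ℝ)
    (v s : ℝ≥0∞) (ω : Ω) : ℝ :=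
  ⨅ σ : STge 𝓕 (fun _ => v), (μ[fun ω' => U s (σ.1 ω') ω' | 𝓕 v]) ω

/-- `ρ₀* = μ₁ 1_{μ₁ ≤ μ₂} + ρ²_{μ₂+δ} 1_{μ₁ > μ₂}`. -/
def rhoStar0 (m1 m2 rsad2 : Ω → ℝ≥0∞) : Ω → ℝ≥0∞ := fun ω =>
  if m1 ω ≤ m2 ω then m1 ω else rsad2 ω

/-- `ρ₁*(t) = ρ_h²(t)` if `t ≥ μ₁ ∧ μ₂ + δ` and `μ₁ > μ₂`, else `ρ_h¹(t)`. -/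
def rhoStar1 (m1 m2 : Ω → ℝ≥0∞) (δ : ℝ) (φ1 φ2 : ℝ≥0∞ → Ω → ℝ≥0∞) :
    ℝ≥0∞ → Ω → ℝ≥0∞ := fun t ω =>
  if (m1 ω ⊓ m2 ω) + ENNReal.ofReal δ ≤ t ∧ m2 ω < m1 ω then φ2 t ω else φ1 t ω

/-- `τ₀* = τ¹_{μ₁+δ} 1_{μ₁ ≤ μ₂} + μ₂ 1_{μ₁ > μ₂}`. -/
def tauStar0 (m1 m2 tsad1 : Ω → ℝ≥0∞) : Ω → ℝ≥0∞ := fun ω =>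
  if m1 ω ≤ m2 ω then tsad1 ω else m2 ω

/-- `τ₁*(t) = τ_h¹(t)` if `t ≥ μ₁ ∧ μ₂ + δ` and `μ₁ ≤ μ₂`, else `τ_h²(t)`. -/
def tauStar1 (m1 m2 : Ω → ℝ≥0∞) (δ : ℝ) (ψ1 ψ2 : ℝ≥0∞ → Ω → ℝ≥0∞) :
    ℝ≥0∞ → Ω → ℝ≥0∞ := fun t ω =>
  if (m1 ω ⊓ m2 ω) + ENNReal.ofReal δ ≤ t ∧ m1 ω ≤ m2 ω then ψ1 t ω else ψ2 t ω
end StoppingGames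

/-!
Let player 1 deviate to `ρ = (ρ₀, ρ₁)` against `τ^ε = (τ₀^ε, τ_h)`. On `{ρ₀ < τ₀^ε}` the realised
payoff `U(ρ₀, τ_h(ρ₀))` is, conditionally on `𝓕_{ρ₀}`, at most `X_{ρ₀} + 2ε` by the choice of `h`;
on `{τ₀^ε < ρ₀}` stopping at `ρ₁(τ₀^ε) > τ₀^ε` earns, conditionally on `𝓕_{τ₀^ε}`, at most
`Y_{τ₀^ε}` by the very definition of `Y` (applied on each of the countably many level sets of
`τ₀^ε`); on `{ρ₀ = τ₀^ε}` both sides are `Z_{ρ₀}`. Hence `u(ρ, τ^ε) ≤ V(ρ₀, τ₀^ε) + 2ε`.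
The dual game with payoff `(s, t) ↦ -U(t, s)` exchanges the players and turns `(X, Y)` into
`(-Y, -X)`, so the same estimate gives `V(ρ₀^ε, τ₀) ≤ u(ρ^ε, (τ₀, τ₁)) + 2ε`. Chaining these two
bounds with the `ε`-saddle inequalities for `V` yields the `5ε` margins for both players.
-/

section Countable

variable {Ω : Type*} [Countable Ω]

lemma measurable_of_forall_mem_measurableAtom {m : MeasurableSpace Ω} {β : Type*}
    [MeasurableSpace β] {f : Ω → β} (hf : ∀ x y, y ∈ measurableAtom x → f y = f x) :
    Measurable[m] f := by
  intro s _
  have : f ⁻¹' s = ⋃ x ∈ f ⁻¹' s, measurableAtom x := by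
    refine subset_antisymm (fun x hx => mem_biUnion hx (mem_measurableAtom_self x)) ?_
    simp only [iUnion_subset_iff]
    intro x hx y hy
    rwa [mem_preimage, hf x y hy]
  rw [this]
  exact .biUnion (to_countable _) fun x _ => .measurableAtom_of_countable x

lemma measurable_comp_family_of_countable {m : MeasurableSpace Ω} {ι β γ : Type*}
    [MeasurableSpace β] [MeasurableSingletonClass β] [MeasurableSpace γ]
    {f : ι → Ω → β} (hf : ∀ i, Measurable[m] (f i)) (Φ : (ι → β) → γ) :
    Measurable[m] fun ω => Φ (fun i => f i ω) :=
  measurable_of_forall_mem_measurableAtom fun x y hy => by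
    congr 1
    funext i
    exact mem_of_mem_measurableAtom hy (hf i (measurableSet_singleton (f i x))) rfl

variable [MeasurableSpace Ω]

lemma measurable_apply_of_countable {β γ : Type*} [MeasurableSpace β]
    [MeasurableSingletonClass β] [MeasurableSpace γ] {F : β → Ω → γ} {a : Ω → β}
    (hF : ∀ b, Measurable (F b)) (ha : Measurable a) : Measurable fun ω => F (a ω) ω := by
  intro s hs
  have : (fun ω => F (a ω) ω) ⁻¹' s = ⋃ x : Ω, a ⁻¹' {a x} ∩ F (a x) ⁻¹' s := by
    ext ω
    simp only [mem_preimage, mem_iUnion, mem_inter_iff, mem_singleton_iff]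
    exact ⟨fun h => ⟨ω, rfl, h⟩, fun ⟨x, hx, h⟩ => hx ▸ h⟩
  rw [this]
  exact .iUnion fun x => (ha (measurableSet_singleton _)).inter (hF _ hs)

lemma setIntegral_le_of_forall_fiber {μ : Measure Ω} {β : Type*} [MeasurableSpace β]
    [MeasurableSingletonClass β] {v : Ω → β} (hv : Measurable v) {S : Set Ω}
    (hS : MeasurableSet S) {f g : Ω → ℝ} (hf : Integrable f μ) (hg : Integrable g μ)
    (h : ∀ t, ∫ ω in S ∩ v ⁻¹' {t}, f ω ∂μ ≤ ∫ ω in S ∩ v ⁻¹' {t}, g ω ∂μ) :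
    ∫ ω in S, f ω ∂μ ≤ ∫ ω in S, g ω ∂μ := by
  have : Countable (range v) := (countable_range v).to_subtype
  let B : range v → Set Ω := fun t => S ∩ v ⁻¹' {t.1}
  have hB : ∀ t, MeasurableSet (B t) := fun t => hS.inter (hv (measurableSet_singleton _))
  have hdisj : Pairwise (Function.onFun Disjoint B) := fun t t' hne => by
    refine Set.disjoint_left.2 fun ω h h' => hne (Subtype.ext ?_)
    rw [← mem_singleton_iff.1 h.2, ← mem_singleton_iff.1 h'.2]
  have hcover : ⋃ t, B t = S := by
    ext ω
    simp only [B, mem_iUnion, mem_inter_iff, mem_preimage, mem_singleton_iff]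
    exact ⟨fun ⟨_, h, _⟩ => h, fun h => ⟨⟨v ω, mem_range_self ω⟩, h, rfl⟩⟩
  have hfS : HasSum (fun t => ∫ ω in B t, f ω ∂μ) (∫ ω in S, f ω ∂μ) :=
    hcover ▸ hasSum_integral_iUnion hB hdisj hf.integrableOn
  have hgS : HasSum (fun t => ∫ ω in B t, g ω ∂μ) (∫ ω in S, g ω ∂μ) :=
    hcover ▸ hasSum_integral_iUnion hB hdisj hg.integrableOn
  exact hasSum_le (fun t : range v => h t.1) hfS hgS

end Countable

section CondExp

variable {Ω : Type*} {mΩ : MeasurableSpace Ω} {μ : Measure Ω} [Countable Ω]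

lemma abs_condExp_le_of_countable (hμ : ∀ ω, μ {ω} ≠ 0) (m : MeasurableSpace Ω) {f : Ω → ℝ}
    {M : ℝ} (hf : ∀ ω, |f ω| ≤ M) (ω : Ω) : |μ[f | m] ω| ≤ M :=
  ae_iff_of_countable.1 (ae_bdd_abs_condExp_of_ae_bdd_abs (ae_of_all μ hf)) ω (hμ ω)

lemma condExp_neg_apply_of_countable (hμ : ∀ ω, μ {ω} ≠ 0) (f : Ω → ℝ) (m : MeasurableSpace Ω)
    (ω : Ω) :
    μ[-f | m] ω = -μ[f | m] ω :=
  ae_iff_of_countable.1 (condExp_neg f m) ω (hμ ω)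

end CondExp

section Integral

variable {Ω : Type*} [mΩ : MeasurableSpace Ω] {μ : Measure Ω}

lemma integrable_of_abs_le [IsFiniteMeasure μ] {f : Ω → ℝ} (hf : Measurable f) {M : ℝ}
    (hM : ∀ ω, |f ω| ≤ M) : Integrable f μ :=
  .of_bound hf.aestronglyMeasurable M (ae_of_all μ hM)

lemma integral_le_of_setIntegral_le {f g : Ω → ℝ} (hf : Integrable f μ) (hg : Integrable g μ)
    {S T : Set Ω} (hS : MeasurableSet S) (hT : MeasurableSet T) (hST : Disjoint S T) {a b : ℝ}
    (hfgS : ∫ ω in S, f ω ∂μ ≤ ∫ ω in S, g ω ∂μ + a)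
    (hfgT : ∫ ω in T, f ω ∂μ ≤ ∫ ω in T, g ω ∂μ + b)
    (hfg : ∀ ω, ω ∉ S → ω ∉ T → f ω = g ω) :
    ∫ ω, f ω ∂μ ≤ ∫ ω, g ω ∂μ + (a + b) := by
  have hST' := hS.union hT
  have hrest : ∫ ω in (S ∪ T)ᶜ, f ω ∂μ = ∫ ω in (S ∪ T)ᶜ, g ω ∂μ :=
    setIntegral_congr_fun hST'.compl fun ω hω => hfg ω (fun h => hω (.inl h)) fun h => hω (.inr h)
  rw [← integral_add_compl hST' hf, ← integral_add_compl hST' hg,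
    setIntegral_union hST hT hf.integrableOn hf.integrableOn,
    setIntegral_union hST hT hg.integrableOn hg.integrableOn, hrest]
  linarith

lemma setIntegral_le_of_condExp_le [IsProbabilityMeasure μ] {m : MeasurableSpace Ω}
    (hm : m ≤ mΩ) {f g : Ω → ℝ} (hf : Integrable f μ) (hg : Integrable g μ) {S : Set Ω}
    (hS : MeasurableSet[m] S) {c : ℝ} (hc : 0 ≤ c) (h : ∀ ω ∈ S, μ[f | m] ω ≤ g ω + c) :
    ∫ ω in S, f ω ∂μ ≤ ∫ ω in S, g ω ∂μ + c := by
  have hμS : μ.real S ≤ 1 := measureReal_le_one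
  calc ∫ ω in S, f ω ∂μ = ∫ ω in S, μ[f | m] ω ∂μ := (setIntegral_condExp hm hf hS).symm
    _ ≤ ∫ ω in S, (g ω + c) ∂μ :=
      setIntegral_mono_on integrable_condExp.integrableOn
        (hg.add (integrable_const c)).integrableOn (hm S hS) h
    _ = ∫ ω in S, g ω ∂μ + μ.real S * c := by
      rw [integral_add hg.integrableOn (integrable_const c).integrableOn, setIntegral_const,
        smul_eq_mul]
    _ ≤ ∫ ω in S, g ω ∂μ + c := by nlinarith

end Integral

lemma Real.iSup_neg_eq_neg_iInf {ι : Sort*} (g : ι → ℝ) : ⨆ i, -g i = -⨅ i, g i := by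
  rw [iSup, iInf, ← Real.sSup_neg, ← Set.image_neg_eq_neg, ← Set.range_comp]
  rfl

namespace StoppingGames

variable {Ω : Type*}

def dualPayoff (U : ℝ≥0∞ → ℝ≥0∞ → Ω → ℝ) : ℝ≥0∞ → ℝ≥0∞ → Ω → ℝ := fun s t ω => -U t s ω

lemma dualPayoff_dualPayoff (U : ℝ≥0∞ → ℝ≥0∞ → Ω → ℝ) : dualPayoff (dualPayoff U) = U := by
  funext s t ω
  exact neg_neg _

lemma dynkinKernel_neg_swap (X Y Z : ℝ≥0∞ → Ω → ℝ) (ρ₀ τ₀ : Ω → ℝ≥0∞) (ω : Ω) :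
    dynkinKernel (-Y) (-X) (-Z) τ₀ ρ₀ ω = -dynkinKernel X Y Z ρ₀ τ₀ ω := by
  unfold dynkinKernel
  rcases lt_trichotomy (ρ₀ ω) (τ₀ ω) with h | h | h
  · simp [h, not_lt_of_gt h]
  · simp [h]
  · simp [h, not_lt_of_gt h]

lemma lt_grid_gridIdx {h : ℝ} (hh : 0 < h) {t : ℝ≥0∞} (ht : t ≠ ∞) :
    t < grid h (gridIdx h t) := by
  rw [grid, ENNReal.lt_ofReal_iff_toReal_lt ht, gridIdx, Nat.cast_add_one, ← div_lt_iff₀ hh]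
  exact Nat.lt_floor_add_one _

variable [mΩ : MeasurableSpace Ω]

lemma dynkinV_neg_swap (μ : Measure Ω) (X Y Z : ℝ≥0∞ → Ω → ℝ) (ρ₀ τ₀ : Ω → ℝ≥0∞) :
    dynkinV μ (-Y) (-X) (-Z) τ₀ ρ₀ = -dynkinV μ X Y Z ρ₀ τ₀ := by
  simp only [dynkinV, dynkinKernel_neg_swap, integral_neg]

lemma payoff_dualPayoff (μ : Measure Ω) (U : ℝ≥0∞ → ℝ≥0∞ → Ω → ℝ)
    (ρ τ : (Ω → ℝ≥0∞) × (ℝ≥0∞ → Ω → ℝ≥0∞)) :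
    payoff μ (dualPayoff U) τ ρ = -payoff μ U ρ τ :=
  integral_neg _

lemma payoff_neg (μ : Measure Ω) (U : ℝ≥0∞ → ℝ≥0∞ → Ω → ℝ)
    (ρ τ : (Ω → ℝ≥0∞) × (ℝ≥0∞ → Ω → ℝ≥0∞)) :
    payoff μ (fun s t ω => -U s t ω) ρ τ = -payoff μ U ρ τ :=
  integral_neg _

lemma measurable_play {ρ τ : (Ω → ℝ≥0∞) × (ℝ≥0∞ → Ω → ℝ≥0∞)} (hρ₀ : Measurable ρ.1)
    (hτ₀ : Measurable τ.1) (hρ₁ : Measurable (Function.uncurry ρ.2)) :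
    Measurable (play ρ τ) :=
  .ite (measurableSet_le hρ₀ hτ₀) hρ₀ (hρ₁.comp (hτ₀.prodMk measurable_id))

section StoppingTimes

variable {𝓕 : Filtration ℝ≥0∞ mΩ}

lemma measurable_of_isStoppingTime {v : Ω → ℝ≥0∞}
    (hv : IsStoppingTime 𝓕 (fun ω => (v ω : WithTop ℝ≥0∞))) : Measurable v :=
  measurable_of_Iic fun t => 𝓕.le t _ <| by
    have := hv t
    simp only [WithTop.coe_le_coe] at this
    exact this

lemma measurableSet_lt_of_isStoppingTime {v w : Ω → ℝ≥0∞}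
    (hv : IsStoppingTime 𝓕 (fun ω => (v ω : WithTop ℝ≥0∞)))
    (hw : IsStoppingTime 𝓕 (fun ω => (w ω : WithTop ℝ≥0∞))) :
    MeasurableSet[hv.measurableSpace] {ω | v ω < w ω} := by
  convert (IsStoppingTime.measurableSet_stopping_time_le hw hv).compl using 1
  ext ω
  simp

lemma isTT_gridStrat {h : ℝ} (hh : 0 < h) {bar : ℕ → Ω → ℝ≥0∞}
    (hbar : ∀ n, bar n ∈ STge 𝓕 (fun _ => grid h n)) : IsTT 𝓕 (gridStrat h bar) := by
  refine ⟨?_, fun t ht => ?_⟩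
  · have hbar_m : Measurable fun p : Ω × ℕ => bar p.2 p.1 :=
      measurable_from_prod_countable_left fun n => measurable_of_isStoppingTime (hbar n).1
    have hidx : Measurable fun t => gridIdx h t :=
      ((ENNReal.measurable_toReal.div_const h).nat_floor).add_const 1
    exact .ite (measurable_fst (measurableSet_singleton ∞)) measurable_const
      (hbar_m.comp (measurable_snd.prodMk (hidx.comp measurable_fst)))
  · have hσ := hbar (gridIdx h t)
    have heq : gridStrat h bar t = bar (gridIdx h t) := funext fun ω => if_neg ht
    exact heq ▸ ⟨hσ.1, fun ω => (lt_grid_gridIdx hh ht).trans_le (hσ.2 ω)⟩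

end StoppingTimes

section Countable

variable [Countable Ω] {U : ℝ≥0∞ → ℝ≥0∞ → Ω → ℝ}

lemma measurable_apply_apply (hUm : ∀ s t, Measurable (U s t)) {a b : Ω → ℝ≥0∞}
    (ha : Measurable a) (hb : Measurable b) : Measurable fun ω => U (a ω) (b ω) ω :=
  measurable_apply_of_countable (F := fun p : ℝ≥0∞ × ℝ≥0∞ => U p.1 p.2)
    (fun p => hUm p.1 p.2) (ha.prodMk hb)

lemma measurable_dynkinKernel {X Y Z : ℝ≥0∞ → Ω → ℝ} (hX : ∀ t, Measurable (X t))
    (hY : ∀ t, Measurable (Y t)) (hZ : ∀ t, Measurable (Z t)) {ρ₀ τ₀ : Ω → ℝ≥0∞}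
    (hρ₀ : Measurable ρ₀) (hτ₀ : Measurable τ₀) : Measurable (dynkinKernel X Y Z ρ₀ τ₀) :=
  .ite (measurableSet_lt hρ₀ hτ₀) (measurable_apply_of_countable hX hρ₀) <|
    .ite (measurableSet_lt hτ₀ hρ₀) (measurable_apply_of_countable hY hτ₀)
      (measurable_apply_of_countable hZ hρ₀)

variable {μ : Measure Ω} {𝓕 : Filtration ℝ≥0∞ mΩ}

lemma measurable_X1v (t : ℝ≥0∞) : Measurable[𝓕 t] (X1v μ 𝓕 U t) :=
  measurable_comp_family_of_countable (fun _ => stronglyMeasurable_condExp.measurable)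
    fun g => ⨅ σ, g σ

lemma measurable_Y1v (t : ℝ≥0∞) : Measurable[𝓕 t] (Y1v μ 𝓕 U t) :=
  measurable_comp_family_of_countable (fun _ => stronglyMeasurable_condExp.measurable)
    fun g => ⨆ σ, g σ

lemma condExp_le_Y1v (hμ : ∀ ω, μ {ω} ≠ 0) {M : ℝ} (hU : ∀ s t ω, |U s t ω| ≤ M)
    {t : ℝ≥0∞} {σ : Ω → ℝ≥0∞} (hσ : σ ∈ STge 𝓕 (fun _ => t)) (ω : Ω) :
    μ[fun ω' => U (σ ω') t ω' | 𝓕 t] ω ≤ Y1v μ 𝓕 U t ω :=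
  le_ciSup (f := fun σ : STge 𝓕 (fun _ => t) => μ[fun ω' => U (σ.1 ω') t ω' | 𝓕 t] ω)
    ⟨M, by
      rintro _ ⟨σ, rfl⟩
      exact (abs_le.1 (abs_condExp_le_of_countable hμ _ (fun ω' => hU _ t ω') ω)).2⟩ ⟨σ, hσ⟩

lemma abs_Y1v_le (hμ : ∀ ω, μ {ω} ≠ 0) {M : ℝ} (hU : ∀ s t ω, |U s t ω| ≤ M)
    (t : ℝ≥0∞) (ω : Ω) : |Y1v μ 𝓕 U t ω| ≤ M := by
  have hσ := fun σ : STge 𝓕 (fun _ => t) =>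
    abs_le.1 (abs_condExp_le_of_countable hμ (𝓕 t) (fun ω' => hU (σ.1 ω') t ω') ω)
  have hne : Nonempty (STge 𝓕 (fun _ => t)) :=
    ⟨⟨fun _ => ∞, isStoppingTime_const 𝓕 ∞, fun _ => le_top⟩⟩
  exact abs_le.2 ⟨(hσ hne.some).1.trans (condExp_le_Y1v hμ hU hne.some.2 ω),
    ciSup_le fun σ => (hσ σ).2⟩

lemma Y1v_dualPayoff (hμ : ∀ ω, μ {ω} ≠ 0) : Y1v μ 𝓕 (dualPayoff U) = -X1v μ 𝓕 U := by
  funext t ω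
  have hneg : ∀ σ : STge 𝓕 (fun _ => t), μ[fun ω' => dualPayoff U (σ.1 ω') t ω' | 𝓕 t] ω =
      -μ[fun ω' => U t (σ.1 ω') ω' | 𝓕 t] ω := fun σ =>
    condExp_neg_apply_of_countable hμ _ _ ω
  simp only [Y1v, hneg, Real.iSup_neg_eq_neg_iInf, X1v, Pi.neg_apply]

lemma X1v_dualPayoff (hμ : ∀ ω, μ {ω} ≠ 0) : X1v μ 𝓕 (dualPayoff U) = -Y1v μ 𝓕 U := by
  rw [← neg_neg (X1v μ 𝓕 (dualPayoff U)), ← Y1v_dualPayoff hμ, dualPayoff_dualPayoff]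

lemma abs_X1v_le (hμ : ∀ ω, μ {ω} ≠ 0) {M : ℝ} (hU : ∀ s t ω, |U s t ω| ≤ M)
    (t : ℝ≥0∞) (ω : Ω) : |X1v μ 𝓕 U t ω| ≤ M := by
  simpa [Y1v_dualPayoff hμ] using
    abs_Y1v_le (U := dualPayoff U) hμ (fun s t ω => (abs_neg (U t s ω)).trans_le (hU t s ω)) t ω

variable [IsProbabilityMeasure μ]

lemma integrable_apply_apply {M : ℝ} (hU : ∀ s t ω, |U s t ω| ≤ M)
    (hUm : ∀ s t, Measurable (U s t)) {a b : Ω → ℝ≥0∞} (ha : Measurable a) (hb : Measurable b) :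
    Integrable (fun ω => U (a ω) (b ω) ω) μ :=
  integrable_of_abs_le (measurable_apply_apply hUm ha hb) fun ω => hU _ _ ω

lemma integrable_X1v_comp (hμ : ∀ ω, μ {ω} ≠ 0) {M : ℝ} (hU : ∀ s t ω, |U s t ω| ≤ M)
    {v : Ω → ℝ≥0∞} (hv : Measurable v) : Integrable (fun ω => X1v μ 𝓕 U (v ω) ω) μ :=
  integrable_of_abs_le
    (measurable_apply_of_countable (fun t => (measurable_X1v t).mono (𝓕.le t) le_rfl) hv)
    fun ω => abs_X1v_le hμ hU _ ω

lemma integrable_Y1v_comp (hμ : ∀ ω, μ {ω} ≠ 0) {M : ℝ} (hU : ∀ s t ω, |U s t ω| ≤ M)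
    {v : Ω → ℝ≥0∞} (hv : Measurable v) : Integrable (fun ω => Y1v μ 𝓕 U (v ω) ω) μ :=
  integrable_of_abs_le
    (measurable_apply_of_countable (fun t => (measurable_Y1v t).mono (𝓕.le t) le_rfl) hv)
    fun ω => abs_Y1v_le hμ hU _ ω

lemma integrable_dynkinKernel (hμ : ∀ ω, μ {ω} ≠ 0) {M : ℝ} (hU : ∀ s t ω, |U s t ω| ≤ M)
    (hUm : ∀ s t, Measurable (U s t)) {ρ₀ τ₀ : Ω → ℝ≥0∞} (hρ₀ : Measurable ρ₀)
    (hτ₀ : Measurable τ₀) :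
    Integrable (dynkinKernel (X1v μ 𝓕 U) (Y1v μ 𝓕 U) (Zv U) ρ₀ τ₀) μ :=
  integrable_of_abs_le (measurable_dynkinKernel (fun t => (measurable_X1v t).mono (𝓕.le t) le_rfl)
      (fun t => (measurable_Y1v t).mono (𝓕.le t) le_rfl) (fun t => hUm t t) hρ₀ hτ₀)
    fun ω => by
      unfold dynkinKernel
      split_ifs
      exacts [abs_X1v_le hμ hU _ ω, abs_Y1v_le hμ hU _ ω, hU _ _ ω]

lemma setIntegral_le_setIntegral_Y1v (hμ : ∀ ω, μ {ω} ≠ 0) {M : ℝ}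
    (hU : ∀ s t ω, |U s t ω| ≤ M) (hUm : ∀ s t, Measurable (U s t)) {v : Ω → ℝ≥0∞}
    (hv : IsStoppingTime 𝓕 (fun ω => (v ω : WithTop ℝ≥0∞))) {S : Set Ω}
    (hS : MeasurableSet[hv.measurableSpace] S) (hSv : ∀ ω ∈ S, v ω ≠ ∞)
    {ρ₁ : ℝ≥0∞ → Ω → ℝ≥0∞} (hρ₁ : IsTT 𝓕 ρ₁) :
    ∫ ω in S, U (ρ₁ (v ω) ω) (v ω) ω ∂μ ≤ ∫ ω in S, Y1v μ 𝓕 U (v ω) ω ∂μ := by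
  have hvm := measurable_of_isStoppingTime hv
  refine setIntegral_le_of_forall_fiber hvm (hv.measurableSpace_le _ hS)
    (integrable_of_abs_le (measurable_apply_of_countable (F := fun t ω => U (ρ₁ t ω) t ω)
      (fun t => measurable_apply_apply hUm (hρ₁.1.comp (measurable_const.prodMk measurable_id))
        measurable_const) hvm) fun ω => hU _ _ ω)
    (integrable_Y1v_comp hμ hU hvm) fun t => ?_
  rcases eq_or_ne t ∞ with rfl | ht
  · have : S ∩ v ⁻¹' {∞} = ∅ := eq_empty_of_forall_notMem fun ω hω => hSv ω hω.1 hω.2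
    simp [this]
  have hB : MeasurableSet[𝓕 t] (S ∩ v ⁻¹' {t}) := by
    have := (IsStoppingTime.measurableSet_inter_eq_iff hv S t).1
      (hS.inter (hv.measurableSet_eq' t))
    simp only [WithTop.coe_inj] at this
    exact this
  have hσ := hρ₁.2 t ht
  calc ∫ ω in S ∩ v ⁻¹' {t}, U (ρ₁ (v ω) ω) (v ω) ω ∂μ
      = ∫ ω in S ∩ v ⁻¹' {t}, U (ρ₁ t ω) t ω ∂μ :=
        setIntegral_congr_fun (𝓕.le t _ hB) fun ω hω => by rw [hω.2]
    _ ≤ ∫ ω in S ∩ v ⁻¹' {t}, Y1v μ 𝓕 U t ω ∂μ + 0 :=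
        setIntegral_le_of_condExp_le (𝓕.le t)
          (integrable_apply_apply hU hUm (measurable_of_isStoppingTime hσ.1) measurable_const)
          (integrable_Y1v_comp (v := fun _ => t) hμ hU measurable_const) hB le_rfl
          fun ω _ => by simpa using condExp_le_Y1v hμ hU ⟨hσ.1, fun ω => (hσ.2 ω).le⟩ ω
    _ = ∫ ω in S ∩ v ⁻¹' {t}, Y1v μ 𝓕 U (v ω) ω ∂μ := by
        rw [add_zero]
        exact setIntegral_congr_fun (𝓕.le t _ hB) fun ω hω => by rw [hω.2]

lemma payoff_le_dynkinV_add (hμ : ∀ ω, μ {ω} ≠ 0) {M : ℝ} (hU : ∀ s t ω, |U s t ω| ≤ M)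
    (hUm : ∀ s t, Measurable (U s t)) {ρ₀ τ₀ : Ω → ℝ≥0∞} {ρ₁ ψ : ℝ≥0∞ → Ω → ℝ≥0∞}
    (hρ₀ : IsStoppingTime 𝓕 (fun ω => (ρ₀ ω : WithTop ℝ≥0∞)))
    (hτ₀ : IsStoppingTime 𝓕 (fun ω => (τ₀ ω : WithTop ℝ≥0∞))) (hρ₁ : IsTT 𝓕 ρ₁)
    (hψ : Measurable (Function.uncurry ψ)) {ε : ℝ} (hε : 0 ≤ ε)
    (hap : ∀ ω, μ[fun ω' => U (ρ₀ ω') (ψ (ρ₀ ω') ω') ω' | hρ₀.measurableSpace] ω - 2 * ε <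
      X1v μ 𝓕 U (ρ₀ ω) ω) :
    payoff μ U (ρ₀, ρ₁) (τ₀, ψ) ≤ dynkinV μ (X1v μ 𝓕 U) (Y1v μ 𝓕 U) (Zv U) ρ₀ τ₀ + 2 * ε := by
  have hρ₀m := measurable_of_isStoppingTime hρ₀
  have hτ₀m := measurable_of_isStoppingTime hτ₀
  have hS₁ := measurableSet_lt_of_isStoppingTime hρ₀ hτ₀
  have hS₂ := measurableSet_lt_of_isStoppingTime hτ₀ hρ₀
  set g := fun ω => U (play (ρ₀, ρ₁) (τ₀, ψ) ω) (play (τ₀, ψ) (ρ₀, ρ₁) ω) ω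
  set k := dynkinKernel (X1v μ 𝓕 U) (Y1v μ 𝓕 U) (Zv U) ρ₀ τ₀
  have hg : Integrable g μ := integrable_apply_apply hU hUm
    (measurable_play hρ₀m hτ₀m hρ₁.1) (measurable_play hτ₀m hρ₀m hψ)
  have hfirst : ∫ ω in {ω | ρ₀ ω < τ₀ ω}, g ω ∂μ ≤ ∫ ω in {ω | ρ₀ ω < τ₀ ω}, k ω ∂μ + 2 * ε :=
    calc _ = ∫ ω in {ω | ρ₀ ω < τ₀ ω}, U (ρ₀ ω) (ψ (ρ₀ ω) ω) ω ∂μ :=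
          setIntegral_congr_fun (hρ₀.measurableSpace_le _ hS₁) fun ω (h : ρ₀ ω < τ₀ ω) => by
            simp [g, play, h.le, not_le.2 h]
      _ ≤ ∫ ω in {ω | ρ₀ ω < τ₀ ω}, X1v μ 𝓕 U (ρ₀ ω) ω ∂μ + 2 * ε :=
          setIntegral_le_of_condExp_le hρ₀.measurableSpace_le
            (integrable_apply_apply (b := fun ω => ψ (ρ₀ ω) ω) hU hUm hρ₀m
              (hψ.comp (hρ₀m.prodMk measurable_id)))
            (integrable_X1v_comp hμ hU hρ₀m) hS₁ (by positivity)
            fun ω _ => by linarith [hap ω]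
      _ = _ := by
          congr 1
          exact setIntegral_congr_fun (hρ₀.measurableSpace_le _ hS₁)
            fun ω (h : ρ₀ ω < τ₀ ω) => by simp [k, dynkinKernel, h]
  have hsecond : ∫ ω in {ω | τ₀ ω < ρ₀ ω}, g ω ∂μ ≤ ∫ ω in {ω | τ₀ ω < ρ₀ ω}, k ω ∂μ + 0 :=
    calc _ = ∫ ω in {ω | τ₀ ω < ρ₀ ω}, U (ρ₁ (τ₀ ω) ω) (τ₀ ω) ω ∂μ :=
          setIntegral_congr_fun (hτ₀.measurableSpace_le _ hS₂) fun ω (h : τ₀ ω < ρ₀ ω) => by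
            simp [g, play, h.le, not_le.2 h]
      _ ≤ ∫ ω in {ω | τ₀ ω < ρ₀ ω}, Y1v μ 𝓕 U (τ₀ ω) ω ∂μ :=
          setIntegral_le_setIntegral_Y1v hμ hU hUm hτ₀ hS₂ (fun ω h => h.ne_top) hρ₁
      _ = _ := by
          rw [add_zero]
          exact setIntegral_congr_fun (hτ₀.measurableSpace_le _ hS₂)
            fun ω (h : τ₀ ω < ρ₀ ω) => by simp [k, dynkinKernel, h, not_lt.2 h.le]
  have := integral_le_of_setIntegral_le hg (integrable_dynkinKernel hμ hU hUm hρ₀m hτ₀m)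
    (measurableSet_lt hρ₀m hτ₀m) (measurableSet_lt hτ₀m hρ₀m)
    (Set.disjoint_left.2 fun ω (h₁ : ρ₀ ω < τ₀ ω) (h₂ : τ₀ ω < ρ₀ ω) => lt_asymm h₁ h₂)
    hfirst hsecond fun ω h₁ h₂ => by
      have h : ρ₀ ω = τ₀ ω := le_antisymm (not_lt.1 h₂) (not_lt.1 h₁)
      simp [g, play, dynkinKernel, Zv, h]
  rw [add_zero] at this
  exact this

lemma dynkinV_le_payoff_add (hμ : ∀ ω, μ {ω} ≠ 0) {M : ℝ} (hU : ∀ s t ω, |U s t ω| ≤ M)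
    (hUm : ∀ s t, Measurable (U s t)) {ρ₀ τ₀ : Ω → ℝ≥0∞} {φ τ₁ : ℝ≥0∞ → Ω → ℝ≥0∞}
    (hρ₀ : IsStoppingTime 𝓕 (fun ω => (ρ₀ ω : WithTop ℝ≥0∞)))
    (hτ₀ : IsStoppingTime 𝓕 (fun ω => (τ₀ ω : WithTop ℝ≥0∞))) (hτ₁ : IsTT 𝓕 τ₁)
    (hφ : Measurable (Function.uncurry φ)) {ε : ℝ} (hε : 0 ≤ ε)
    (hap : ∀ ω, Y1v μ 𝓕 U (τ₀ ω) ω <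
      μ[fun ω' => U (φ (τ₀ ω') ω') (τ₀ ω') ω' | hτ₀.measurableSpace] ω + 2 * ε) :
    dynkinV μ (X1v μ 𝓕 U) (Y1v μ 𝓕 U) (Zv U) ρ₀ τ₀ ≤ payoff μ U (ρ₀, φ) (τ₀, τ₁) + 2 * ε := by
  have hdual := payoff_le_dynkinV_add (U := dualPayoff U) hμ
    (fun s t ω => (abs_neg (U t s ω)).trans_le (hU t s ω)) (fun s t => (hUm t s).neg)
    hτ₀ hρ₀ hτ₁ hφ hε fun ω => by
      have hneg : μ[fun ω' => dualPayoff U (τ₀ ω') (φ (τ₀ ω') ω') ω' | hτ₀.measurableSpace] ω =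
          -μ[fun ω' => U (φ (τ₀ ω') ω') (τ₀ ω') ω' | hτ₀.measurableSpace] ω :=
        condExp_neg_apply_of_countable hμ _ _ ω
      rw [X1v_dualPayoff hμ, Pi.neg_apply, Pi.neg_apply, hneg]
      linarith [hap ω]
  rw [payoff_dualPayoff, X1v_dualPayoff hμ, Y1v_dualPayoff hμ,
    show Zv (dualPayoff U) = -Zv U from rfl, dynkinV_neg_swap] at hdual
  linarith

end Countable

/-- Proposition 3.3: in the zero-sum case `U¹ = −U² = U`, if `(ρ₀^ε, τ₀^ε)`
is an `ε`-saddle point for the Dynkin game `V` built from `(X, Y, Z)` and `h` is small enough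
that the approximation inequalities hold, then `((ρ₀^ε, ρ_h), (τ₀^ε, τ_h))` is a `5ε`-Nash
equilibrium for the stopping game. -/
theorem zero_sum_nash [Countable Ω] (μ : Measure Ω) [IsProbabilityMeasure μ]
    (𝓕 : Filtration ℝ≥0∞ mΩ) (hsetup : UsualSetup μ 𝓕)
    (U : ℝ≥0∞ → ℝ≥0∞ → Ω → ℝ) (r : ℝ≥0∞ → ℝ) (hU : PayoffAssumption 𝓕 U r)
    (ε h : ℝ) (hε : 0 < ε) (hh : 0 < h)
    (ρbar τbar : ℕ → Ω → ℝ≥0∞)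
    (hρopt : IsOptRho1 μ 𝓕 U ε h ρbar) (hτopt : IsOptTau1 μ 𝓕 U ε h τbar)
    (happrox : ∀ (ρ₀ τ₀ : Ω → ℝ≥0∞) (hρ₀ : IsStoppingTime 𝓕 (fun ω => (ρ₀ ω : WithTop ℝ≥0∞)))
        (hτ₀ : IsStoppingTime 𝓕 (fun ω => (τ₀ ω : WithTop ℝ≥0∞))),
      (∀ᵐ ω ∂μ,
        (μ[fun ω' => U (ρ₀ ω') (evalAt (gridStrat h τbar) ρ₀ ω') ω' |
          hρ₀.measurableSpace]) ω - 2*ε < X1v μ 𝓕 U (ρ₀ ω) ω) ∧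
      (∀ᵐ ω ∂μ,
        Y1v μ 𝓕 U (τ₀ ω) ω <
          (μ[fun ω' => U (evalAt (gridStrat h ρbar) τ₀ ω') (τ₀ ω') ω' |
            hτ₀.measurableSpace]) ω + 2*ε))
    (ρ₀ε τ₀ε : Ω → ℝ≥0∞) (hρ₀ε : IsStoppingTime 𝓕 (fun ω => (ρ₀ε ω : WithTop ℝ≥0∞))) (hτ₀ε : IsStoppingTime 𝓕 (fun ω => (τ₀ε ω : WithTop ℝ≥0∞)))
    (hsaddle : ∀ ρ₀ τ₀ : Ω → ℝ≥0∞, IsStoppingTime 𝓕 (fun ω => (ρ₀ ω : WithTop ℝ≥0∞)) → IsStoppingTime 𝓕 (fun ω => (τ₀ ω : WithTop ℝ≥0∞)) →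
      dynkinV μ (X1v μ 𝓕 U) (Y1v μ 𝓕 U) (Zv U) ρ₀ τ₀ε - ε <
        dynkinV μ (X1v μ 𝓕 U) (Y1v μ 𝓕 U) (Zv U) ρ₀ε τ₀ε ∧
      dynkinV μ (X1v μ 𝓕 U) (Y1v μ 𝓕 U) (Zv U) ρ₀ε τ₀ε <
        dynkinV μ (X1v μ 𝓕 U) (Y1v μ 𝓕 U) (Zv U) ρ₀ε τ₀ + ε) :
    IsStrategy 𝓕 (ρ₀ε, gridStrat h ρbar) ∧ IsStrategy 𝓕 (τ₀ε, gridStrat h τbar) ∧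
    ∀ ρ τ : (Ω → ℝ≥0∞) × (ℝ≥0∞ → Ω → ℝ≥0∞), IsStrategy 𝓕 ρ → IsStrategy 𝓕 τ →
      payoff μ U ρ (τ₀ε, gridStrat h τbar) ≤
        payoff μ U (ρ₀ε, gridStrat h ρbar) (τ₀ε, gridStrat h τbar) + 5*ε ∧
      payoff μ (fun s t ω => -U s t ω) (ρ₀ε, gridStrat h ρbar) τ ≤
        payoff μ (fun s t ω => -U s t ω) (ρ₀ε, gridStrat h ρbar)
          (τ₀ε, gridStrat h τbar) + 5*ε := by
  obtain ⟨hμ, -⟩ := hsetup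
  obtain ⟨⟨M, hM⟩, hU𝓕, -⟩ := hU
  have hUm : ∀ s t, Measurable (U s t) := fun s t => (hU𝓕 s t).mono (𝓕.le _) le_rfl
  have hρTT := isTT_gridStrat hh fun n => (hρopt n).1
  have hτTT := isTT_gridStrat hh fun n => (hτopt n).1
  have hX := fun ρ₀ τ₀ hρ₀ hτ₀ ω => ae_iff_of_countable.1 (happrox ρ₀ τ₀ hρ₀ hτ₀).1 ω (hμ ω)
  have hY := fun ρ₀ τ₀ hρ₀ hτ₀ ω => ae_iff_of_countable.1 (happrox ρ₀ τ₀ hρ₀ hτ₀).2 ω (hμ ω)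
  refine ⟨⟨hρ₀ε, hρTT⟩, ⟨hτ₀ε, hτTT⟩, fun ⟨ρ₀, ρ₁⟩ ⟨τ₀, τ₁⟩ hρ hτ => ?_⟩
  have hdev₁ := payoff_le_dynkinV_add hμ hM hUm hρ.1 hτ₀ε hρ.2 hτTT.1 hε.le
    (hX ρ₀ τ₀ε hρ.1 hτ₀ε)
  have hdev₂ := dynkinV_le_payoff_add hμ hM hUm hρ₀ε hτ.1 hτ.2 hρTT.1 hε.le
    (hY ρ₀ε τ₀ hρ₀ε hτ.1)
  have heq₁ := payoff_le_dynkinV_add hμ hM hUm hρ₀ε hτ₀ε hρTT hτTT.1 hε.le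
    (hX ρ₀ε τ₀ε hρ₀ε hτ₀ε)
  have heq₂ := dynkinV_le_payoff_add hμ hM hUm hρ₀ε hτ₀ε hτTT hρTT.1 hε.le
    (hY ρ₀ε τ₀ε hρ₀ε hτ₀ε)
  obtain ⟨hsaddle₁, hsaddle₂⟩ := hsaddle ρ₀ τ₀ hρ.1 hτ.1
  rw [payoff_neg, payoff_neg]
  exact ⟨by linarith, by linarith⟩

end StoppingGames
end
end

section
/- For i = 1,2, the process W^i = (W_t^i)_{t∈[0,∞]} defined by W_t^1 := E[U¹(t, τ_h²(t)) | 𝓕_t] and W_t^2 := E[U²(ρ_h¹(t), t) | 𝓕_t] is right continuous (pathwise, at every t ∈ [0,∞)). -/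
/-!
Common setup for "On the non-zero-sum stopping game ending at the maximum of the stopping
strategies".  Time is indexed by `[0,∞] = ℝ≥0∞`.  Since `Ω` is at most countable and `ℙ`
charges every point, essential suprema/infima over families of stopping times coincide with
the pointwise ones, which is how they are formalized below.
-/

open MeasureTheory Filter Set
open scoped ENNReal Topology

noncomputable section

/-!
On a countable space in which every point is charged, `E[g | 𝓖](ω)` is the average of `g` over
the `𝓖`-atom of `ω`. Right continuity of the filtration makes the `𝓕_t`-atom of `ω` the increasing
union of its `𝓕_s`-atoms as `s ↓ t`, so `s ↦ E[g | 𝓕_s](ω)` is right continuous. On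
`[t, (⌊t/h⌋+1)h)` the grid strategy is a single stopping time `τ`, so there `W_s = E[V_s | 𝓕_s]`
with `V_s = U(s, τ)`, and the modulus `r` makes `V_s → V_t` uniformly.
-/

namespace MeasureTheory

variable {Ω : Type*}

lemma measurable_apply_of_countable [Countable Ω] [MeasurableSpace Ω] {β γ : Type*}
    [MeasurableSpace β] [MeasurableSingletonClass β] [MeasurableSpace γ] {τ : Ω → β}
    (hτ : Measurable τ) {F : β → Ω → γ} (hF : ∀ b, Measurable (F b)) :
    Measurable fun ω => F (τ ω) ω := by
  intro s hs
  have hpre : (fun ω => F (τ ω) ω) ⁻¹' s = ⋃ ω', τ ⁻¹' {τ ω'} ∩ F (τ ω') ⁻¹' s := by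
    ext x
    simp only [mem_preimage, mem_iUnion, mem_inter_iff, mem_singleton_iff]
    exact ⟨fun hx => ⟨x, rfl, hx⟩, fun ⟨ω', hτx, hx⟩ => by rwa [hτx]⟩
  rw [hpre]
  exact .iUnion fun ω' => (hτ (measurableSet_singleton _)).inter (hF _ hs)

lemma measurableAtom_mono {m m' : MeasurableSpace Ω} (h : m ≤ m') (ω : Ω) :
    @measurableAtom Ω m' ω ⊆ @measurableAtom Ω m ω := by
  intro x hx
  simp only [measurableAtom, mem_iInter] at hx ⊢
  exact fun s hωs hs => hx s hωs (h s hs)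

lemma measurableSet_of_forall_measurableAtom_subset [Countable Ω] {m : MeasurableSpace Ω}
    {B : Set Ω} (hB : ∀ x ∈ B, @measurableAtom Ω m x ⊆ B) : MeasurableSet[m] B := by
  have hunion : B = ⋃ x ∈ B, @measurableAtom Ω m x :=
    subset_antisymm (fun x hx => mem_biUnion hx (@mem_measurableAtom_self _ m x))
      (iUnion₂_subset hB)
  rw [hunion]
  exact .biUnion (to_countable B) fun x _ => @MeasurableSet.measurableAtom_of_countable _ m _ x

lemma measure_measurableAtom_ne_zero {m m₀ : MeasurableSpace Ω} {μ : Measure Ω} {ω : Ω}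
    (hω : μ {ω} ≠ 0) : μ (@measurableAtom Ω m ω) ≠ 0 :=
  fun h0 => hω (measure_mono_null (singleton_subset_iff.2 (@mem_measurableAtom_self _ m ω)) h0)

lemma condExp_apply_eq_setAverage [Countable Ω] {m m₀ : MeasurableSpace Ω} (hm : m ≤ m₀)
    {μ : Measure Ω} [IsFiniteMeasure μ] {g : Ω → ℝ} (hg : Integrable g μ) {ω : Ω}
    (hω : μ {ω} ≠ 0) :
    (μ[g|m]) ω = ⨍ x in @measurableAtom Ω m ω, g x ∂μ := by
  set A := @measurableAtom Ω m ω
  have hA : MeasurableSet[m] A := @MeasurableSet.measurableAtom_of_countable Ω m _ ω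
  have hconst : ∀ x ∈ A, (μ[g|m]) x = (μ[g|m]) ω := fun x hx =>
    @mem_of_mem_measurableAtom _ m _ _ hx _
      (stronglyMeasurable_condExp.measurable (measurableSet_singleton ((μ[g|m]) ω))) rfl
  calc (μ[g|m]) ω = ⨍ _ in A, (μ[g|m]) ω ∂μ :=
        (setAverage_const (measure_measurableAtom_ne_zero hω) (measure_ne_top μ A) _).symm
    _ = ⨍ x in A, (μ[g|m]) x ∂μ :=
        setAverage_congr_fun (hm A hA) (ae_of_all _ fun x hx => (hconst x hx).symm)
    _ = ⨍ x in A, g x ∂μ := by rw [setAverage_eq, setAverage_eq, setIntegral_condExp hm hg hA]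

lemma abs_condExp_sub_condExp_apply_le [Countable Ω] {m m₀ : MeasurableSpace Ω} (hm : m ≤ m₀)
    {μ : Measure Ω} [IsFiniteMeasure μ] {g₁ g₂ : Ω → ℝ} (hg₁ : Integrable g₁ μ)
    (hg₂ : Integrable g₂ μ) {C : ℝ} (hC : ∀ x, |g₁ x - g₂ x| ≤ C) {ω : Ω} (hω : μ {ω} ≠ 0) :
    |(μ[g₁|m]) ω - (μ[g₂|m]) ω| ≤ C := by
  set A := @measurableAtom Ω m ω
  have hA : 0 < μ.real A :=
    ENNReal.toReal_pos (measure_measurableAtom_ne_zero hω) (measure_ne_top μ A)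
  have hint : |∫ x in A, (g₁ x - g₂ x) ∂μ| ≤ C * μ.real A :=
    norm_setIntegral_le_of_norm_le_const (f := fun x => g₁ x - g₂ x) (measure_lt_top μ A)
      fun x _ => hC x
  rw [condExp_apply_eq_setAverage hm hg₁ hω, condExp_apply_eq_setAverage hm hg₂ hω,
    setAverage_eq, setAverage_eq, smul_eq_mul, smul_eq_mul, ← mul_sub,
    ← integral_sub hg₁.integrableOn hg₂.integrableOn, abs_mul, abs_inv, abs_of_pos hA,
    inv_mul_le_iff₀ hA, mul_comm]
  exact hint

section RightContinuous

variable {ι : Type*} {m₀ : MeasurableSpace Ω} [LinearOrder ι] {𝓕 : Filtration ι m₀} {t : ι}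

lemma measurableAtom_eq_biUnion_of_rightContinuous [Countable Ω]
    (hrc : 𝓕 t = ⨅ s ∈ Ioi t, 𝓕 s) (ht : ¬IsMax t) (ω : Ω) :
    @measurableAtom Ω (𝓕 t) ω = ⋃ s > t, @measurableAtom Ω (𝓕 s) ω := by
  refine subset_antisymm (@measurableAtom_subset _ (𝓕 t) _ _ ?_ ?_)
    (iUnion₂_subset fun s hs => measurableAtom_mono (𝓕.mono hs.le) ω)
  · rw [hrc]
    simp only [MeasurableSpace.measurableSet_iInf]
    intro s' hs'
    refine measurableSet_of_forall_measurableAtom_subset fun x hx => ?_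
    obtain ⟨s, hs, hxs⟩ := mem_iUnion₂.1 hx
    have hx' : x ∈ @measurableAtom Ω (𝓕 (min s s')) ω :=
      measurableAtom_mono (𝓕.mono (min_le_left s s')) ω hxs
    calc @measurableAtom Ω (𝓕 s') x ⊆ @measurableAtom Ω (𝓕 (min s s')) x :=
          measurableAtom_mono (𝓕.mono (min_le_right s s')) x
      _ = @measurableAtom Ω (𝓕 (min s s')) ω :=
          @measurableAtom_eq_of_mem _ (𝓕 (min s s')) _ _ hx'
      _ ⊆ _ := subset_biUnion_of_mem (u := fun s => @measurableAtom Ω (𝓕 s) ω) (lt_min hs hs')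
  · obtain ⟨s, hs⟩ := not_isMax_iff.1 ht
    exact mem_biUnion hs (@mem_measurableAtom_self _ (𝓕 s) ω)

variable [TopologicalSpace ι] [OrderTopology ι] [FirstCountableTopology ι]

lemma tendsto_measure_measurableAtom_sdiff [Countable Ω] (μ : Measure Ω) [IsFiniteMeasure μ]
    (hrc : 𝓕 t = ⨅ s ∈ Ioi t, 𝓕 s) (ht : ¬IsMax t) (ω : Ω) :
    Tendsto (fun s => μ (@measurableAtom Ω (𝓕 t) ω \ @measurableAtom Ω (𝓕 s) ω))
      (𝓝[>] t) (𝓝 0) := by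
  set A : ι → Set Ω := fun s => @measurableAtom Ω (𝓕 s) ω
  obtain ⟨s₀, hs₀⟩ := not_isMax_iff.1 ht
  have hempty : ⋂ s > t, A t \ A s = ∅ := by
    refine eq_empty_of_forall_notMem fun x hx => ?_
    simp only [mem_iInter₂, Set.mem_sdiff] at hx
    have hxt := (hx s₀ hs₀).1
    simp only [A, measurableAtom_eq_biUnion_of_rightContinuous hrc ht ω, mem_iUnion₂] at hxt
    obtain ⟨s, hs, hxs⟩ := hxt
    exact (hx s hs).2 hxs
  have hA : ∀ s, MeasurableSet (A s) := fun s =>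
    𝓕.le s _ (@MeasurableSet.measurableAtom_of_countable Ω (𝓕 s) _ ω)
  have hlim := tendsto_measure_biInter_gt (μ := μ) (s := fun s => A t \ A s) (a := t)
    (fun s _ => ((hA t).diff (hA s)).nullMeasurableSet)
    (fun i j _ hij => sdiff_subset_sdiff_right (measurableAtom_mono (𝓕.mono hij) ω))
    ⟨s₀, hs₀, measure_ne_top μ _⟩
  rwa [hempty, measure_empty] at hlim

theorem continuousWithinAt_condExp_apply [Countable Ω] {μ : Measure Ω} [IsFiniteMeasure μ]
    (hrc : 𝓕 t = ⨅ s ∈ Ioi t, 𝓕 s) (ht : ¬IsMax t) {g : Ω → ℝ} (hg : Integrable g μ) {ω : Ω}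
    (hω : μ {ω} ≠ 0) :
    ContinuousWithinAt (fun s => (μ[g|𝓕 s]) ω) (Ici t) t := by
  set A : ι → Set Ω := fun s => @measurableAtom Ω (𝓕 s) ω
  have hA : ∀ s, MeasurableSet (A s) := fun s =>
    𝓕.le s _ (@MeasurableSet.measurableAtom_of_countable Ω (𝓕 s) _ ω)
  have hD := tendsto_measure_measurableAtom_sdiff μ hrc ht ω
  have hDreal : Tendsto (fun s => μ.real (A t \ A s)) (𝓝[>] t) (𝓝 0) := by
    have h := (ENNReal.tendsto_toReal ENNReal.zero_ne_top).comp hD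
    rwa [ENNReal.toReal_zero] at h
  have hAt : μ.real (A t) ≠ 0 :=
    (ENNReal.toReal_pos (measure_measurableAtom_ne_zero hω) (measure_ne_top _ _)).ne'
  have hlim := ((tendsto_const_nhds.sub hDreal).inv₀ (by simpa using hAt)).smul
    ((tendsto_const_nhds (x := ∫ x in A t, g x ∂μ)).sub (hg.tendsto_setIntegral_nhds_zero hD))
  rw [← continuousWithinAt_Ioi_iff_Ici, ContinuousWithinAt,
    condExp_apply_eq_setAverage (𝓕.le t) hg hω, setAverage_eq]
  simp only [sub_zero] at hlim
  refine hlim.congr' ?_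
  filter_upwards [self_mem_nhdsWithin] with s hs
  have hsub : A s ⊆ A t := measurableAtom_mono (𝓕.mono (le_of_lt hs)) ω
  rw [condExp_apply_eq_setAverage (𝓕.le s) hg hω, setAverage_eq, measureReal_sdiff hsub (hA s),
    setIntegral_sdiff (hA s) hg.integrableOn hsub, sub_sub_cancel, sub_sub_cancel]

theorem continuousWithinAt_condExp_apply_of_tendstoUniformly [Countable Ω] {μ : Measure Ω}
    [IsFiniteMeasure μ] (hrc : 𝓕 t = ⨅ s ∈ Ioi t, 𝓕 s) (ht : ¬IsMax t) {V : ι → Ω → ℝ}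
    (hV : ∀ s, Integrable (V s) μ) (hVt : TendstoUniformly V (V t) (𝓝[≥] t)) {ω : Ω}
    (hω : μ {ω} ≠ 0) :
    ContinuousWithinAt (fun s => (μ[V s|𝓕 s]) ω) (Ici t) t := by
  have hclose : Tendsto (fun s => (μ[V s|𝓕 s]) ω - (μ[V t|𝓕 s]) ω) (𝓝[≥] t) (𝓝 0) := by
    rw [Metric.tendsto_nhds]
    intro ε hε
    filter_upwards [Metric.tendstoUniformly_iff.1 hVt (ε / 2) (half_pos hε)] with s hs
    rw [Real.dist_0_eq_abs]
    refine (abs_condExp_sub_condExp_apply_le (𝓕.le s) (hV s) (hV t) (fun x => ?_) hω).trans_lt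
      (half_lt_self hε)
    rw [abs_sub_comm, ← Real.dist_eq]
    exact (hs x).le
  rw [ContinuousWithinAt]
  simpa using hclose.add (continuousWithinAt_condExp_apply hrc ht (hV t) hω)

end RightContinuous

end MeasureTheory

namespace StoppingGames

variable {Ω : Type*} [mΩ : MeasurableSpace Ω]

lemma measurable_of_mem_STge {𝓕 : Filtration ℝ≥0∞ mΩ} {σ τ : Ω → ℝ≥0∞}
    (hτ : τ ∈ STge 𝓕 σ) : Measurable τ :=
  (hτ.1.measurable.untopD 0).mono hτ.1.measurableSpace_le le_rfl

lemma dd_self (a : ℝ≥0∞) : dd a a = 0 := by simp [dd]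

lemma tendsto_modulus_dd {r : ℝ≥0∞ → ℝ} (hr0 : r 0 = 0) (hr : Tendsto r (𝓝[>] 0) (𝓝 0))
    {t : ℝ≥0∞} (ht : t ≠ ∞) : Tendsto (fun s => r (dd s t)) (𝓝 t) (𝓝 0) := by
  have hrcont : ContinuousAt r 0 := by
    have hIci : Ici (0 : ℝ≥0∞) = univ := eq_univ_of_forall fun x => mem_Ici.2 zero_le
    rw [← continuousWithinAt_univ, ← hIci, ← continuousWithinAt_Ioi_iff_Ici, ContinuousWithinAt,
      hr0]
    exact hr
  have hdd : Tendsto (fun s => dd s t) (𝓝 t) (𝓝 0) := by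
    have h := (ENNReal.Tendsto.sub (tendsto_id (x := 𝓝 t)) tendsto_const_nhds (Or.inr ht)).add
      (ENNReal.Tendsto.sub tendsto_const_nhds tendsto_id (Or.inl ht))
    simpa [dd] using h
  have h := hrcont.tendsto.comp hdd
  rwa [hr0] at h

omit mΩ in
lemma gridStrat_eventually_eq {h : ℝ} (hh : 0 < h) (bar : ℕ → Ω → ℝ≥0∞) {t : ℝ≥0∞}
    (ht : t ≠ ∞) : ∀ᶠ s in 𝓝[≥] t, gridStrat h bar s = bar (gridIdx h t) := by
  have hquot : Tendsto (fun s : ℝ≥0∞ => s.toReal / h) (𝓝[≥] t) (𝓝[≥] (t.toReal / h)) := by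
    refine tendsto_nhdsWithin_iff.2
      ⟨((ENNReal.tendsto_toReal ht).div_const h).mono_left nhdsWithin_le_nhds, ?_⟩
    filter_upwards [self_mem_nhdsWithin, nhdsWithin_le_nhds (eventually_ne_nhds ht)] with s hts hs
    exact div_le_div_of_nonneg_right (ENNReal.toReal_mono hs hts) hh.le
  filter_upwards [tendsto_pure.1 ((tendsto_floor_right_pure_floor _).comp hquot),
    nhdsWithin_le_nhds (eventually_ne_nhds ht)] with s hfloor hs
  funext ω
  simp only [Function.comp_apply] at hfloor
  simp only [gridStrat, gridIdx, if_neg hs, ← Int.floor_toNat, hfloor]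

theorem continuousWithinAt_condExp_gridStrat [Countable Ω] {μ : Measure Ω} [IsFiniteMeasure μ]
    {𝓕 : Filtration ℝ≥0∞ mΩ} {t : ℝ≥0∞} (hrc : 𝓕 t = ⨅ s ∈ Ioi t, 𝓕 s) (ht : t ≠ ∞)
    {ω : Ω} (hω : μ {ω} ≠ 0) {Φ : ℝ≥0∞ → ℝ≥0∞ → Ω → ℝ} (hΦm : ∀ s a, Measurable (Φ s a))
    {M : ℝ} (hΦM : ∀ s a x, |Φ s a x| ≤ M) {r : ℝ≥0∞ → ℝ} (hr0 : r 0 = 0)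
    (hr : Tendsto r (𝓝[>] 0) (𝓝 0)) (hΦr : ∀ s s' a x, |Φ s a x - Φ s' a x| ≤ r (dd s s'))
    {h : ℝ} (hh : 0 < h) {bar : ℕ → Ω → ℝ≥0∞} (hbar : Measurable (bar (gridIdx h t))) :
    ContinuousWithinAt (fun s => (μ[fun x => Φ s (gridStrat h bar s x) x|𝓕 s]) ω) (Ici t) t := by
  set τ := bar (gridIdx h t)
  have hV : ∀ s, Integrable (fun x => Φ s (τ x) x) μ := fun s =>
    .of_bound (measurable_apply_of_countable hbar (hΦm s)).aestronglyMeasurable M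
      (ae_of_all _ fun x => hΦM s (τ x) x)
  have hunif : TendstoUniformly (fun s x => Φ s (τ x) x) (fun x => Φ t (τ x) x) (𝓝[≥] t) := by
    refine Metric.tendstoUniformly_iff.2 fun ε hε => ?_
    filter_upwards [nhdsWithin_le_nhds
      ((tendsto_modulus_dd hr0 hr ht).eventually (gt_mem_nhds hε))] with s hs x
    rw [Real.dist_eq, abs_sub_comm]
    exact (hΦr s t (τ x) x).trans_lt hs
  have hgrid := gridStrat_eventually_eq hh bar ht
  refine (continuousWithinAt_condExp_apply_of_tendstoUniformly hrc (not_isMax_iff_ne_top.2 ht)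
    hV hunif hω).congr_of_eventuallyEq ?_ ?_
  · filter_upwards [hgrid] with s hs
    rw [hs]
  · rw [hgrid.self_of_nhdsWithin self_mem_Ici]

theorem W_rightContinuous_general [Countable Ω] (μ : Measure Ω) [IsProbabilityMeasure μ]
    (𝓕 : Filtration ℝ≥0∞ mΩ) (hsetup : UsualSetup μ 𝓕)
    (U1 U2 : ℝ≥0∞ → ℝ≥0∞ → Ω → ℝ) (r : ℝ≥0∞ → ℝ)
    (hU1 : PayoffAssumption 𝓕 U1 r) (hU2 : PayoffAssumption 𝓕 U2 r)
    (ε h : ℝ) (hh : 0 < h)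
    (ρbar1 τbar2 : ℕ → Ω → ℝ≥0∞)
    (hρ1 : IsOptRho1 μ 𝓕 U1 ε h ρbar1) (hτ2 : IsOptTau2 μ 𝓕 U2 ε h τbar2) :
    ∀ ω : Ω, ∀ t : ℝ≥0∞, t ≠ ∞ →
      ContinuousWithinAt (fun s => W1v μ 𝓕 U1 h τbar2 s ω) (Ici t) t ∧
      ContinuousWithinAt (fun s => W2v μ 𝓕 U2 h ρbar1 s ω) (Ici t) t := by
  obtain ⟨hμ, hrc, -, -⟩ := hsetup
  obtain ⟨⟨M1, hM1⟩, hU1m, -, -, -, hr0, hr, hU1r⟩ := hU1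
  obtain ⟨⟨M2, hM2⟩, hU2m, -, -, -, -, -, hU2r⟩ := hU2
  intro ω t ht
  exact ⟨continuousWithinAt_condExp_gridStrat (hrc t) ht (hμ ω)
      (fun s a => (hU1m s a).mono (𝓕.le _) le_rfl) hM1 hr0 hr
      (fun s s' a x => by simpa [dd_self] using hU1r s a s' a x) hh
      (measurable_of_mem_STge (hτ2 _).1),
    continuousWithinAt_condExp_gridStrat (Φ := fun s a => U2 a s) (hrc t) ht (hμ ω)
      (fun s a => (hU2m a s).mono (𝓕.le _) le_rfl) (fun s a => hM2 a s) hr0 hr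
      (fun s s' a x => by simpa [dd_self] using hU2r a s a s' x) hh
      (measurable_of_mem_STge (hρ1 _).1)⟩

/-- Lemma 4.1: the processes `W¹_t = E[U¹(t, τ_h²(t)) | 𝓕_t]` and
`W²_t = E[U²(ρ_h¹(t), t) | 𝓕_t]` are (pathwise) right continuous at every `t ∈ [0,∞)`. -/
theorem W_rightContinuous [Countable Ω] (μ : Measure Ω) [IsProbabilityMeasure μ]
    (𝓕 : Filtration ℝ≥0∞ mΩ) (hsetup : UsualSetup μ 𝓕)
    (U1 U2 : ℝ≥0∞ → ℝ≥0∞ → Ω → ℝ) (r : ℝ≥0∞ → ℝ)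
    (hU1 : PayoffAssumption 𝓕 U1 r) (hU2 : PayoffAssumption 𝓕 U2 r)
    (ε h : ℝ) (hε : 0 < ε) (hh : 0 < h)
    (ρbar1 τbar2 : ℕ → Ω → ℝ≥0∞)
    (hρ1 : IsOptRho1 μ 𝓕 U1 ε h ρbar1) (hτ2 : IsOptTau2 μ 𝓕 U2 ε h τbar2) :
    ∀ ω : Ω, ∀ t : ℝ≥0∞, t ≠ ∞ →
      ContinuousWithinAt (fun s => W1v μ 𝓕 U1 h τbar2 s ω) (Ici t) t ∧
      ContinuousWithinAt (fun s => W2v μ 𝓕 U2 h ρbar1 s ω) (Ici t) t :=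
  W_rightContinuous_general μ 𝓕 hsetup U1 U2 r hU1 hU2 ε h hh ρbar1 τbar2 hρ1 hτ2

end StoppingGames
end
end
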